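/- arXiv:1904.13373 — 5 statements merged into one kernel-verified Lean document; each statement's English description precedes it below -/
import Mathlib

section
/- Let E be a K×m real matrix such that every column of E has squared ℓ2-norm L, the inner product of any two distinct columns equals λ, and Eᵀ·𝟙_K = L·𝟙_m (each column sums to L), where L > λ ≥ 0. Then the vector v* = (L/(L + λ(m-1)))·𝟙_m minimizes ‖E·v − 𝟙_K‖² over v ∈ ℝ^m, and the minimum value equals K − L²m/(L + λ(m-1)). -/
open Finset

/-- Optimal decoding vector and approximation error for symmetric-BIBD gradient codes. -/
theorem bibd_code_optimal_decoding (K m : ℕ) (L lam : ℝ) (hL : lam < L) (hlam : 0 ≤ lam)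
    (E : Matrix (Fin K) (Fin m) ℝ)
    (hnorm : ∀ j, ∑ i, (E i j) ^ 2 = L)
    (hinner : ∀ j j', j ≠ j' → ∑ i, E i j * E i j' = lam)
    (hsum : ∀ j, ∑ i, E i j = L) :
    (∀ v : Fin m → ℝ,
        ∑ i, (E.mulVec (fun _ => L / (L + lam * ((m : ℝ) - 1))) i - 1) ^ 2 ≤
          ∑ i, (E.mulVec v i - 1) ^ 2) ∧
      ∑ i, (E.mulVec (fun _ => L / (L + lam * ((m : ℝ) - 1))) i - 1) ^ 2 =
        K - L ^ 2 * m / (L + lam * ((m : ℝ) - 1)) := by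
  set c : ℝ := L + lam * ((m : ℝ) - 1) with hc_def
  have hc : 0 < c := by
    rcases Nat.eq_zero_or_pos m with h | h
    · subst h; simp only [hc_def, Nat.cast_zero]; nlinarith
    · have h1 : (1 : ℝ) ≤ (m : ℝ) := by exact_mod_cast h
      nlinarith
  -- key expansion of the objective
  have key : ∀ v : Fin m → ℝ, ∑ i, (E.mulVec v i - 1) ^ 2 =
      (L - lam) * (∑ j, v j ^ 2) + lam * (∑ j, v j) ^ 2 - 2 * L * (∑ j, v j) + K := by
    intro v
    have h2 : ∑ i, E.mulVec v i = L * ∑ j, v j := by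
      simp only [Matrix.mulVec, dotProduct]
      rw [Finset.sum_comm, Finset.mul_sum]
      refine Finset.sum_congr rfl fun j _ => ?_
      rw [← Finset.sum_mul, hsum j]
    have h1 : ∑ i, (E.mulVec v i) ^ 2 =
        (L - lam) * (∑ j, v j ^ 2) + lam * (∑ j, v j) ^ 2 := by
      have step1 : ∑ i, (E.mulVec v i) ^ 2
          = ∑ i, ∑ j, ∑ j', (E i j * v j) * (E i j' * v j') := by
        refine Finset.sum_congr rfl fun i _ => ?_
        rw [sq]
        simp only [Matrix.mulVec, dotProduct]
        rw [Finset.sum_mul_sum]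
      have step2 : ∑ i, ∑ j, ∑ j', (E i j * v j) * (E i j' * v j')
          = ∑ j, ∑ j', (∑ i, E i j * E i j') * (v j * v j') := by
        rw [Finset.sum_comm]
        refine Finset.sum_congr rfl fun j _ => ?_
        rw [Finset.sum_comm]
        refine Finset.sum_congr rfl fun j' _ => ?_
        rw [Finset.sum_mul]
        exact Finset.sum_congr rfl fun i _ => by ring
      have step3 : ∑ j, ∑ j', (∑ i, E i j * E i j') * (v j * v j')
          = ∑ j, ∑ j', (if j = j' then L else lam) * (v j * v j') := by
        refine Finset.sum_congr rfl fun j _ => Finset.sum_congr rfl fun j' _ => ?_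
        by_cases h : j = j'
        · subst h
          have : ∑ i, E i j * E i j = ∑ i, (E i j) ^ 2 :=
            Finset.sum_congr rfl fun i _ => (sq (E i j)).symm
          simp [this, hnorm j]
        · simp [h, hinner j j' h]
      have step4 : ∑ j, ∑ j', (if j = j' then L else lam) * (v j * v j')
          = (L - lam) * (∑ j, v j ^ 2) + lam * (∑ j, v j) ^ 2 := by
        have split : ∀ j j' : Fin m, (if j = j' then L else lam) * (v j * v j')
            = lam * (v j * v j') + (if j = j' then (L - lam) * v j ^ 2 else 0) := by
          intro j j'
          by_cases h : j = j'
          · subst h; simp; ring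
          · simp [h]
        calc ∑ j, ∑ j', (if j = j' then L else lam) * (v j * v j')
            = ∑ j, (lam * (v j * ∑ j', v j') + (L - lam) * v j ^ 2) := by
              refine Finset.sum_congr rfl fun j _ => ?_
              rw [Finset.sum_congr rfl fun j' _ => split j j', Finset.sum_add_distrib,
                Finset.sum_ite_eq]
              simp [Finset.mul_sum]
          _ = (L - lam) * (∑ j, v j ^ 2) + lam * (∑ j, v j) ^ 2 := by
              have eA : ∑ x : Fin m, lam * (v x * ∑ j' : Fin m, v j')
                  = lam * (∑ j, v j) ^ 2 := by
                rw [show (∑ x : Fin m, lam * (v x * ∑ j' : Fin m, v j'))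
                    = ∑ x : Fin m, v x * (lam * ∑ j' : Fin m, v j') from
                  Finset.sum_congr rfl fun x _ => by ring, ← Finset.sum_mul]
                ring
              rw [Finset.sum_add_distrib, eA, ← Finset.mul_sum]
              ring
      rw [step1, step2, step3, step4]
    calc ∑ i, (E.mulVec v i - 1) ^ 2
        = ∑ i, ((E.mulVec v i) ^ 2 - 2 * (E.mulVec v i) + 1) := by
          refine Finset.sum_congr rfl fun i _ => by ring
      _ = (∑ i, (E.mulVec v i) ^ 2) - 2 * (∑ i, E.mulVec v i) + K := by
          rw [Finset.sum_add_distrib, Finset.sum_sub_distrib, ← Finset.mul_sum]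
          simp
      _ = (L - lam) * (∑ j, v j ^ 2) + lam * (∑ j, v j) ^ 2 - 2 * L * (∑ j, v j) + K := by
          rw [h1, h2]; ring
  -- value at the optimal point
  have hval : ∑ i, (E.mulVec (fun _ => L / c) i - 1) ^ 2 = K - L ^ 2 * m / c := by
    rw [key]
    have hs : ∑ _j : Fin m, L / c = (m : ℝ) * (L / c) := by
      simp [Finset.sum_const, mul_comm]
    have hq : ∑ _j : Fin m, (L / c) ^ 2 = (m : ℝ) * (L / c) ^ 2 := by
      simp [Finset.sum_const, mul_comm]
    rw [hs, hq]
    have hc' : c ≠ 0 := ne_of_gt hc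
    field_simp
    ring
  refine ⟨fun v => ?_, hval⟩
  rw [hval, key v]
  set s : ℝ := ∑ j, v j with hs_def
  set Q : ℝ := ∑ j, v j ^ 2 with hQ_def
  have hCS : s ^ 2 ≤ (m : ℝ) * Q := by
    have := sq_sum_le_card_mul_sum_sq (s := (Finset.univ : Finset (Fin m))) (f := v)
    simpa using this
  rcases Nat.eq_zero_or_pos m with h | h
  · subst h
    simp only [hs_def, hQ_def] at *
    simp at hs_def hQ_def ⊢
  · have hm : (0 : ℝ) < (m : ℝ) := by exact_mod_cast h
    have key2 : 0 ≤ ((L - lam) * Q + lam * s ^ 2 - 2 * L * s) * c + L ^ 2 * m := by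
      have hid : (m : ℝ) * (((L - lam) * Q + lam * s ^ 2 - 2 * L * s) * c + L ^ 2 * m)
          = (L - lam) * c * ((m : ℝ) * Q - s ^ 2) + (c * s - L * (m : ℝ)) ^ 2 := by
        rw [hc_def]; ring
      nlinarith [mul_nonneg (mul_nonneg (sub_nonneg.2 hL.le) hc.le)
          (sub_nonneg.2 hCS), sq_nonneg (c * s - L * (m : ℝ)), hm]
    rw [sub_le_iff_le_add, ← sub_le_iff_le_add', le_div_iff₀ hc]
    linarith [key2]
end

section
/- (Fisher's inequality) In any (v,b,r,k,λ)-BIBD with 2 ≤ k < v and λ ≥ 1, the number of blocks satisfies b ≥ v. -/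
/-!
Double counting the incidences of a fixed point with the blocks through it gives
`(v - 1) λ = (k - 1) r`, hence `r > λ` because `k < v`. The Gram matrix of the incidence matrix is
`M Mᵀ = (r - λ) I + λ J`, positive definite as the sum of a positive definite and a positive
semidefinite matrix, so it has rank `v`; since that rank is at most the rank of `M`, `v ≤ b`.
-/

open Finset Matrix

namespace Matrix

variable {m n R : Type*} [Fintype n]

theorem card_le_card_of_isUnit_mul_transpose {K : Type*} [Field K] [Fintype m] [DecidableEq m]
    (A : Matrix m n K) (hA : IsUnit (A * Aᵀ)) : Fintype.card m ≤ Fintype.card n :=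
  calc Fintype.card m = (A * Aᵀ).rank := (rank_of_isUnit _ hA).symm
    _ ≤ A.rank := rank_mul_le_left A Aᵀ
    _ ≤ Fintype.card n := rank_le_card_width A

theorem posSemidef_const_of_nonneg [CommRing R] [PartialOrder R] [StarRing R] [StarOrderedRing R]
    [TrivialStar R] {d : R} (hd : 0 ≤ d) : (of fun _ _ : n => d).PosSemidef := by
  have hJ : (of fun _ _ : n => d) = d • vecMulVec 1 (star 1) := by
    ext; simp
  rw [hJ]
  exact (posSemidef_vecMulVec_self_star 1).smul hd

theorem posDef_smul_one_add_const [Field R] [PartialOrder R] [StarRing R] [StarOrderedRing R]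
    [PosMulStrictMono R] [TrivialStar R] [DecidableEq n] {c d : R} (hc : 0 < c) (hd : 0 ≤ d) :
    (c • (1 : Matrix n n R) + of fun _ _ => d).PosDef :=
  (PosDef.one.smul hc).add_posSemidef (posSemidef_const_of_nonneg hd)

variable [CommRing R] {M : Matrix m n R} {k r lam : R}

theorem mul_transpose_self_eq_smul_one_add_const [DecidableEq m]
    (hidem : ∀ i j, IsIdempotentElem (M i j))
    (hrow : ∀ i, ∑ j, M i j = r)
    (hpair : ∀ i i', i ≠ i' → ∑ j, M i j * M i' j = lam) :
    M * Mᵀ = (r - lam) • (1 : Matrix m m R) + of fun _ _ => lam := by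
  ext i i'
  rcases eq_or_ne i i' with rfl | hne
  · simp [mul_apply, (hidem _ _).eq, hrow]
  · simp [mul_apply, hne, hpair i i' hne]

theorem card_sub_one_mul_eq_of_incidence [Fintype m] [Nonempty m]
    (hidem : ∀ i j, IsIdempotentElem (M i j))
    (hcol : ∀ j, ∑ i, M i j = k)
    (hrow : ∀ i, ∑ j, M i j = r)
    (hpair : ∀ i i', i ≠ i' → ∑ j, M i j * M i' j = lam) :
    ((Fintype.card m : R) - 1) * lam = (k - 1) * r := by
  classical
  obtain ⟨i⟩ := ‹Nonempty m›
  have hothers : ∀ j, ∑ i' ∈ univ.erase i, M i j * M i' j = M i j * k - M i j := by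
    intro j
    rw [← mul_sum, sum_erase_eq_sub (mem_univ i), hcol j, mul_sub, (hidem i j).eq]
  calc ((Fintype.card m : R) - 1) * lam = ∑ i' ∈ univ.erase i, lam := by
        rw [sum_const, card_erase_of_mem (mem_univ i), card_univ, nsmul_eq_mul,
          Nat.cast_pred Fintype.card_pos]
    _ = ∑ i' ∈ univ.erase i, ∑ j, M i j * M i' j :=
        sum_congr rfl fun i' hi' => (hpair i i' (ne_of_mem_erase hi').symm).symm
    _ = (k - 1) * r := by
        rw [sum_comm, sum_congr rfl fun j _ => hothers j, sum_sub_distrib, ← sum_mul, hrow]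
        ring

end Matrix

/-- Fisher's inequality: in any (v,b,r,k,λ)-BIBD with 2 ≤ k < v and λ ≥ 1, b ≥ v. -/
theorem fisher_inequality (v b r k lam : ℕ) (hk2 : 2 ≤ k) (hkv : k < v) (hlam : 1 ≤ lam)
    (M : Matrix (Fin v) (Fin b) ℝ)
    (h01 : ∀ i j, M i j = 0 ∨ M i j = 1)
    (hcol : ∀ j, ∑ i, M i j = k)
    (hrow : ∀ i, ∑ j, M i j = r)
    (hpair : ∀ i i', i ≠ i' → ∑ j, M i j * M i' j = lam) :
    b ≥ v := by
  have hidem : ∀ i j, IsIdempotentElem (M i j) := fun i j => by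
    rcases h01 i j with h | h <;> simp [h, IsIdempotentElem]
  have : Nonempty (Fin v) := ⟨⟨0, by omega⟩⟩
  have hcount := card_sub_one_mul_eq_of_incidence hidem hcol hrow hpair
  rw [Fintype.card_fin] at hcount
  have hlam_lt_r : (lam : ℝ) < r := by
    have hk1 : (1 : ℝ) < k := by exact_mod_cast hk2
    have hkv' : (k : ℝ) < v := by exact_mod_cast hkv
    have hlam' : (0 : ℝ) < lam := by exact_mod_cast hlam
    have hrep : ((k : ℝ) - 1) * (r - lam) = (v - k) * lam := by linear_combination -hcount
    have hpos := hrep ▸ mul_pos (sub_pos.2 hkv') hlam'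
    exact sub_pos.1 (pos_of_mul_pos_right hpos (sub_pos.2 hk1).le)
  have hgram : (M * Mᵀ).PosDef := mul_transpose_self_eq_smul_one_add_const hidem hrow hpair ▸
    posDef_smul_one_add_const (sub_pos.2 hlam_lt_r) (Nat.cast_nonneg lam)
  simpa using card_le_card_of_isUnit_mul_transpose M hgram.isUnit
end

section
/- Let M be the v×v incidence matrix of a symmetric (v,k,λ)-BIBD (so b=v, r=k). Then any two distinct columns of M have inner product exactly λ; i.e., Mᵀ·M = (k−λ)·I_v + λ·J_v. -/
open Finset Matrix

/-- For a symmetric (v,k,λ)-BIBD, any two distinct blocks intersect in exactly λ points: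
MᵀM = (k−λ)I + λJ. -/
theorem symmetric_bibd_block_intersections (v k lam : ℕ) (hk2 : 2 ≤ k) (hkv : k < v)
    (M : Matrix (Fin v) (Fin v) ℝ)
    (h01 : ∀ i j, M i j = 0 ∨ M i j = 1)
    (hcol : ∀ j, ∑ i, M i j = k)
    (hrow : ∀ i, ∑ j, M i j = k)
    (hpair : ∀ i i', i ≠ i' → ∑ j, M i j * M i' j = lam) :
    Mᵀ * M = ((k : ℝ) - (lam : ℝ)) • (1 : Matrix (Fin v) (Fin v) ℝ) +
      (lam : ℝ) • (Matrix.of fun _ _ => (1 : ℝ)) := by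
  have hv : 0 < v := lt_trans (lt_of_lt_of_le (by norm_num) hk2) hkv
  set J : Matrix (Fin v) (Fin v) ℝ := Matrix.of fun _ _ => (1 : ℝ) with hJ
  set A : Matrix (Fin v) (Fin v) ℝ :=
    ((k : ℝ) - (lam : ℝ)) • (1 : Matrix (Fin v) (Fin v) ℝ) + (lam : ℝ) • J with hA
  -- basic matrix identities
  have hJJ : J * J = (v : ℝ) • J := by
    ext i j; simp [hJ, Matrix.mul_apply, Matrix.smul_apply]
  have hMJ : M * J = (k : ℝ) • J := by
    ext i j; simp [hJ, Matrix.mul_apply, Matrix.smul_apply, hrow]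
  have hJM : J * M = (k : ℝ) • J := by
    ext i j; simp [hJ, Matrix.mul_apply, Matrix.smul_apply, hcol]
  have hsq : ∀ i j, M i j * M i j = M i j := by
    intro i j; rcases h01 i j with h | h <;> simp [h]
  -- M Mᵀ = A
  have hMMT : M * Mᵀ = A := by
    ext i i'
    by_cases h : i = i'
    · subst h
      have : ∑ j, M i j * M i j = (k : ℝ) := by
        simp only [hsq]; exact hrow i
      simp [hA, hJ, Matrix.mul_apply, Matrix.transpose_apply, Matrix.add_apply,
        Matrix.smul_apply, Matrix.one_apply, this]
    · simp [hA, hJ, Matrix.mul_apply, Matrix.transpose_apply, Matrix.add_apply,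
        Matrix.smul_apply, Matrix.one_apply, h, hpair i i' h]
  -- lam (v-1) = k (k-1)
  have hvk : ((lam : ℝ)) * ((v : ℝ) - 1) = (k : ℝ) * ((k : ℝ) - 1) := by
    obtain ⟨i0⟩ : Nonempty (Fin v) := ⟨⟨0, hv⟩⟩
    have h1 : ∑ i' ∈ univ \ {i0}, (∑ j, M i0 j * M i' j) = ((v : ℝ) - 1) * lam := by
      rw [Finset.sum_congr rfl (fun i' hi' => hpair i0 i'
        (by simp at hi'; exact fun h => hi' h.symm))]
      rw [Finset.sum_const, Finset.card_sdiff_of_subset (by simp), Finset.card_univ,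
        Fintype.card_fin, Finset.card_singleton, nsmul_eq_mul,
        Nat.cast_sub hv, Nat.cast_one, mul_comm]
    have h2 : ∑ i' ∈ univ \ {i0}, (∑ j, M i0 j * M i' j)
        = (k : ℝ) * (k : ℝ) - (k : ℝ) := by
      rw [Finset.sum_comm]
      have : ∀ j, ∑ i' ∈ univ \ {i0}, M i0 j * M i' j
          = M i0 j * (k : ℝ) - M i0 j := by
        intro j
        rw [← Finset.mul_sum]
        have : ∑ i' ∈ univ \ {i0}, M i' j = (k : ℝ) - M i0 j := by
          have := hcol j
          rw [Finset.sum_sdiff_eq_sub (by simp)]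
          simp [this]
        rw [this]
        rcases h01 i0 j with h | h <;> simp [h]
      rw [Finset.sum_congr rfl (fun j _ => this j)]
      rw [Finset.sum_sub_distrib, ← Finset.sum_mul, hrow i0]
    rw [h1] at h2
    rw [mul_comm]; rw [h2]; ring
  -- lam < k
  have hlk : (lam : ℝ) < (k : ℝ) := by
    have hv1 : (0 : ℝ) < (v : ℝ) - 1 := by
      have : (1 : ℝ) < (v : ℝ) := by exact_mod_cast lt_of_le_of_lt (le_trans (by norm_num) hk2) hkv
      linarith
    have hkk : (k : ℝ) * ((k : ℝ) - 1) < (k : ℝ) * ((v : ℝ) - 1) := by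
      have hk0 : (0 : ℝ) < (k : ℝ) := by exact_mod_cast lt_of_lt_of_le (by norm_num) hk2
      have : ((k : ℝ) - 1) < ((v : ℝ) - 1) := by
        have : (k : ℝ) < (v : ℝ) := by exact_mod_cast hkv
        linarith
      exact mul_lt_mul_of_pos_left this hk0
    nlinarith [hvk]
  have hk0 : (0 : ℝ) < (k : ℝ) - lam := by linarith
  have hd1 : ((k : ℝ) - lam) ≠ 0 := ne_of_gt hk0
  have hd2 : ((k : ℝ) - lam) + (v : ℝ) * lam ≠ 0 := by positivity
  set d : ℝ := ((k : ℝ) - (lam : ℝ)) * (((k : ℝ) - (lam : ℝ)) + (v : ℝ) * (lam : ℝ)) with hd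
  have hdne : d ≠ 0 := mul_ne_zero hd1 hd2
  set B : Matrix (Fin v) (Fin v) ℝ :=
    d⁻¹ • ((((k : ℝ) - (lam : ℝ)) + (v : ℝ) * (lam : ℝ)) • (1 : Matrix (Fin v) (Fin v) ℝ)
      + (-(lam : ℝ)) • J) with hB
  have expand : (((k : ℝ) - (lam : ℝ)) • (1 : Matrix (Fin v) (Fin v) ℝ) + (lam : ℝ) • J) *
      ((((k : ℝ) - (lam : ℝ)) + (v : ℝ) * (lam : ℝ)) • (1 : Matrix (Fin v) (Fin v) ℝ)
        + (-(lam : ℝ)) • J) = d • (1 : Matrix (Fin v) (Fin v) ℝ) := by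
    simp only [add_mul, mul_add, Matrix.smul_mul, Matrix.mul_smul, one_mul, mul_one,
      hJJ, smul_smul]
    rw [hd]
    module
  have hAB : A * B = 1 := by
    rw [hB, Matrix.mul_smul, hA, expand, smul_smul, inv_mul_cancel₀ hdne, one_smul]
  have hMN : M * (Mᵀ * B) = 1 := by rw [← Matrix.mul_assoc, hMMT, hAB]
  have hNM : (Mᵀ * B) * M = 1 := mul_eq_one_comm.mp hMN
  have hMA : M * A = A * M := by
    rw [hA, Matrix.mul_add, Matrix.add_mul, Matrix.mul_smul, Matrix.mul_smul,
      Matrix.smul_mul, Matrix.smul_mul, one_mul, mul_one, hMJ, hJM]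
  have L : ((Mᵀ * B) * (M * Mᵀ)) * M = Mᵀ * M := by
    rw [show ((Mᵀ * B) * (M * Mᵀ)) * M = ((Mᵀ * B) * M) * (Mᵀ * M) by
      simp only [Matrix.mul_assoc], hNM, one_mul]
  have R : ((Mᵀ * B) * A) * M = A := by
    rw [Matrix.mul_assoc, ← hMA, ← Matrix.mul_assoc, hNM, one_mul]
  rw [← L, hMMT, R]
end

section
/- Let G = (V,E) be a finite connected d-regular graph on n vertices with adjacency-matrix eigenvalues d = λ₁ ≥ λ₂ ≥ … ≥ λ_n. Then the isoperimetric (expanding) constant h(G) = min over nonempty F ⊊ V of |∂F|/min(|F|, |V∖F|) satisfies h(G) ≥ (d − λ₂)/2. -/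
/-!
Test the Rayleigh quotient of the adjacency matrix on the cut vector `x = |Fᶜ|·1_F − |F|·1_{Fᶜ}`.
Its entries sum to zero, and on a connected `d`-regular graph the eigenvalue-`d` eigenvector is
constant, so `x` is orthogonal to it and `xᵀAx ≤ λ₂ ‖x‖²`. On the other hand
`d ‖x‖² − xᵀAx = xᵀLx = n² |∂F|` and `‖x‖² = n |F| |Fᶜ|`, whence
`(d − λ₂) |F| |Fᶜ| ≤ n |∂F| ≤ 2 max(|F|, |Fᶜ|) |∂F|`.
-/

open Finset Matrix

namespace Matrix.IsHermitian

variable {ι : Type*} [Fintype ι] [DecidableEq ι] {A : Matrix ι ι ℝ} (hA : A.IsHermitian)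

theorem dotProduct_self_eq_sum_sq_eigenvectorBasis (x : ι → ℝ) :
    x ⬝ᵥ x = ∑ i, (⇑(hA.eigenvectorBasis i) ⬝ᵥ x) ^ 2 := by
  have := hA.eigenvectorBasis.sum_inner_mul_inner (WithLp.toLp 2 x) (WithLp.toLp 2 x)
  simp only [EuclideanSpace.inner_eq_star_dotProduct, star_trivial] at this
  simp only [← this, sq, dotProduct_comm x]

theorem dotProduct_mulVec_eq_sum_eigenvalues_mul_sq (x : ι → ℝ) :
    x ⬝ᵥ (A *ᵥ x) = ∑ i, hA.eigenvalues i * (⇑(hA.eigenvectorBasis i) ⬝ᵥ x) ^ 2 := by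
  have := hA.eigenvectorBasis.sum_inner_mul_inner (WithLp.toLp 2 x) (WithLp.toLp 2 (A *ᵥ x))
  simp only [EuclideanSpace.inner_eq_star_dotProduct, star_trivial] at this
  have hsymm : Aᵀ = A := isHermitian_iff_isSymm.mp hA
  have hterm (i : ι) : (A *ᵥ x) ⬝ᵥ ⇑(hA.eigenvectorBasis i)
      = hA.eigenvalues i * (⇑(hA.eigenvectorBasis i) ⬝ᵥ x) := by
    rw [dotProduct_comm, dotProduct_mulVec, ← mulVec_transpose, hsymm, mulVec_eigenvectorBasis,
      smul_dotProduct, smul_eq_mul]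
  rw [dotProduct_comm, ← this]
  simp only [hterm, sq]
  exact sum_congr rfl fun i _ => by ring

theorem dotProduct_mulVec_le_of_dotProduct_eigenvectorBasis_eq_zero {i₀ : ι} {μ : ℝ}
    (hμ : ∀ i ≠ i₀, hA.eigenvalues i ≤ μ) {x : ι → ℝ}
    (hx : ⇑(hA.eigenvectorBasis i₀) ⬝ᵥ x = 0) :
    x ⬝ᵥ (A *ᵥ x) ≤ μ * (x ⬝ᵥ x) := by
  rw [hA.dotProduct_mulVec_eq_sum_eigenvalues_mul_sq,
    hA.dotProduct_self_eq_sum_sq_eigenvectorBasis, mul_sum]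
  refine sum_le_sum fun i _ => ?_
  rcases eq_or_ne i i₀ with rfl | hi
  · simp [hx]
  · exact mul_le_mul_of_nonneg_right (hμ i hi) (sq_nonneg _)

end Matrix.IsHermitian

theorem Finset.sum_ite_mem_univ {V : Type*} [Fintype V] [DecidableEq V] (F : Finset V)
    (α β : ℝ) : ∑ u, (if u ∈ F then α else β) = #F * α + #(univ \ F) * β := by
  rw [← compl_eq_univ_sdiff, ← sum_add_sum_compl F, sum_ite_of_true fun _ h => h,
    sum_ite_of_false fun _ h => mem_compl.mp h]
  simp

theorem div_two_le_div_min_of_mul_le {a b c e : ℝ} (ha : 0 < a) (hb : 0 < b) (he : 0 ≤ e)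
    (h : c * (a * b) ≤ (a + b) * e) : c / 2 ≤ e / min a b := by
  have hmin : 0 < min a b := lt_min ha hb
  have hmin_mul : min a b * (a + b) ≤ 2 * (a * b) := by
    rcases min_cases a b with ⟨hm, hab⟩ | ⟨hm, hab⟩ <;> rw [hm] <;> nlinarith
  rw [div_le_div_iff₀ two_pos hmin]
  refine le_of_mul_le_mul_right ?_ (mul_pos ha hb)
  calc c * min a b * (a * b) = c * (a * b) * min a b := by ring
    _ ≤ (a + b) * e * min a b := mul_le_mul_of_nonneg_right h hmin.le
    _ = e * (min a b * (a + b)) := by ring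
    _ ≤ e * (2 * (a * b)) := mul_le_mul_of_nonneg_left hmin_mul he
    _ = e * 2 * (a * b) := by ring

namespace SimpleGraph

variable {V : Type*} [Fintype V] [DecidableEq V] {G : SimpleGraph V} [DecidableRel G.Adj] {d : ℕ}

theorem IsRegularOfDegree.lapMatrix_eq {R : Type*} [Ring R] (hreg : G.IsRegularOfDegree d) :
    G.lapMatrix R = (d : R) • 1 - G.adjMatrix R := by
  rw [lapMatrix, degMatrix, funext fun v => congrArg (Nat.cast (R := R)) (hreg v)]
  ext i j
  simp [diagonal_apply, one_apply]

theorem Connected.apply_eq_of_adjMatrix_mulVec_eq_smul (hconn : G.Connected)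
    (hreg : G.IsRegularOfDegree d) {v : V → ℝ} (hv : G.adjMatrix ℝ *ᵥ v = (d : ℝ) • v)
    (i j : V) : v i = v j := by
  have hker : G.lapMatrix ℝ *ᵥ v = 0 := by
    rw [hreg.lapMatrix_eq, sub_mulVec, hv, smul_mulVec, one_mulVec, sub_self]
  exact G.lapMatrix_mulVec_eq_zero_iff_forall_reachable.mp hker i j (hconn i j)

theorem dotProduct_lapMatrix_mulVec_ite (F : Finset V) (α β : ℝ) :
    (fun u => if u ∈ F then α else β) ⬝ᵥ (G.lapMatrix ℝ *ᵥ fun u => if u ∈ F then α else β)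
      = (α - β) ^ 2 * #{p : V × V | G.Adj p.1 p.2 ∧ p.1 ∈ F ∧ p.2 ∉ F} := by
  set cut : V × V → Prop := fun p => G.Adj p.1 p.2 ∧ p.1 ∈ F ∧ p.2 ∉ F
  have hterm (p : V × V) :
      (if G.Adj p.1 p.2 then ((if p.1 ∈ F then α else β) - if p.2 ∈ F then α else β) ^ 2 else 0)
        = (α - β) ^ 2 * ((if cut p then 1 else 0) + if cut p.swap then 1 else 0) := by
    by_cases hadj : G.Adj p.1 p.2 <;> by_cases h1 : p.1 ∈ F <;> by_cases h2 : p.2 ∈ F <;>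
      simp [cut, hadj, h1, h2, G.adj_comm p.2 p.1, sub_sq_comm β]
  have hswap : ∑ p : V × V, (if cut p.swap then (1 : ℝ) else 0)
      = ∑ p : V × V, if cut p then 1 else 0 :=
    (Equiv.prodComm V V).sum_comp fun p => if cut p then (1 : ℝ) else 0
  rw [← toLinearMap₂'_apply', lapMatrix_toLinearMap₂', ← Fintype.sum_prod_type']
  simp only [hterm, ← mul_sum, sum_add_distrib, hswap, sum_boole]
  ring

theorem Connected.sub_mul_dotProduct_self_le_dotProduct_lapMatrix_mulVec (hconn : G.Connected)
    (hreg : G.IsRegularOfDegree d) (hA : (G.adjMatrix ℝ).IsHermitian) {i₀ : V}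
    (hi₀ : hA.eigenvalues i₀ = d) {μ : ℝ} (hμ : ∀ i ≠ i₀, hA.eigenvalues i ≤ μ) {x : V → ℝ}
    (hx : ∑ u, x u = 0) :
    (d - μ) * (x ⬝ᵥ x) ≤ x ⬝ᵥ (G.lapMatrix ℝ *ᵥ x) := by
  set v : V → ℝ := ⇑(hA.eigenvectorBasis i₀)
  obtain ⟨u₀⟩ := hconn.nonempty
  have hv : v = fun _ => v u₀ := funext fun u =>
    hconn.apply_eq_of_adjMatrix_mulVec_eq_smul hreg (by rw [hA.mulVec_eigenvectorBasis, hi₀]) u u₀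
  have hvx : v ⬝ᵥ x = 0 := by
    rw [hv, dotProduct, ← mul_sum, hx, mul_zero]
  have hray := hA.dotProduct_mulVec_le_of_dotProduct_eigenvectorBasis_eq_zero hμ hvx
  rw [hreg.lapMatrix_eq, sub_mulVec, smul_mulVec, one_mulVec, dotProduct_sub, dotProduct_smul,
    smul_eq_mul]
  linarith

theorem Connected.sub_mul_card_mul_card_le_add_mul_card_cut (hconn : G.Connected)
    (hreg : G.IsRegularOfDegree d) (hA : (G.adjMatrix ℝ).IsHermitian) {i₀ : V}
    (hi₀ : hA.eigenvalues i₀ = d) {μ : ℝ} (hμ : ∀ i ≠ i₀, hA.eigenvalues i ≤ μ) (F : Finset V) :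
    (d - μ) * (#F * #(univ \ F)) ≤
      (#F + #(univ \ F)) * #{p : V × V | G.Adj p.1 p.2 ∧ p.1 ∈ F ∧ p.2 ∉ F} := by
  have hpos : (0 : ℝ) < #F + #(univ \ F) := by
    rw [← Nat.cast_add, ← compl_eq_univ_sdiff, card_add_card_compl]
    exact_mod_cast Fintype.card_pos_iff.mpr hconn.nonempty
  set a : ℝ := (#F : ℝ)
  set b : ℝ := (#(univ \ F) : ℝ)
  set x : V → ℝ := fun u => if u ∈ F then b else -a
  have hsum : ∑ u, x u = 0 := by
    rw [sum_ite_mem_univ]; ring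
  have hself : x ⬝ᵥ x = a * b * (a + b) := by
    calc x ⬝ᵥ x = ∑ u, (if u ∈ F then b * b else -a * -a) :=
          sum_congr rfl fun u _ => by simp only [x]; split_ifs <;> rfl
      _ = a * b * (a + b) := by rw [sum_ite_mem_univ]; ring
  have hgap := hconn.sub_mul_dotProduct_self_le_dotProduct_lapMatrix_mulVec hreg hA hi₀ hμ hsum
  rw [dotProduct_lapMatrix_mulVec_ite, hself, sub_neg_eq_add] at hgap
  refine le_of_mul_le_mul_right ?_ hpos
  linarith

end SimpleGraph

theorem cheeger_lower_bound_general (n d : ℕ) (G : SimpleGraph (Fin n))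
    [DecidableRel G.Adj] (hconn : G.Connected) (hreg : G.IsRegularOfDegree d)
    (hA : (G.adjMatrix ℝ).IsHermitian)
    (i₀ : Fin n) (hi₀ : hA.eigenvalues i₀ = d)
    (lam2 : ℝ) (hlam2 : lam2 = sSup {x : ℝ | ∃ i, i ≠ i₀ ∧ hA.eigenvalues i = x}) :
    ∀ F : Finset (Fin n), F.Nonempty → F ≠ Finset.univ →
      ((d : ℝ) - lam2) / 2 ≤
        ((Finset.univ.filter
            (fun p : Fin n × Fin n => G.Adj p.1 p.2 ∧ p.1 ∈ F ∧ p.2 ∉ F)).card : ℝ) /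
          min (F.card : ℝ) ((Finset.univ \ F).card : ℝ) := by
  intro F hF hFuniv
  have hlam : ∀ i ≠ i₀, hA.eigenvalues i ≤ lam2 := fun i hi =>
    hlam2 ▸ le_csSup ((Set.finite_range hA.eigenvalues).subset
      (by rintro _ ⟨j, -, rfl⟩; exact Set.mem_range_self j)).bddAbove ⟨i, hi, rfl⟩
  have hFc : (univ \ F).Nonempty := sdiff_nonempty.mpr fun h => hFuniv (univ_subset_iff.mp h)
  exact div_two_le_div_min_of_mul_le (by exact_mod_cast hF.card_pos)
    (by exact_mod_cast hFc.card_pos) (by positivity)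
    (hconn.sub_mul_card_mul_card_le_add_mul_card_cut hreg hA hi₀ hlam F)

/-- Alon–Milman/Cheeger bound: for a finite connected d-regular graph with second largest
adjacency eigenvalue λ₂, the isoperimetric constant satisfies h(G) ≥ (d − λ₂)/2. -/
theorem cheeger_lower_bound (n d : ℕ) (hn : 2 ≤ n) (G : SimpleGraph (Fin n))
    [DecidableRel G.Adj] (hconn : G.Connected) (hreg : G.IsRegularOfDegree d)
    (hA : (G.adjMatrix ℝ).IsHermitian)
    (i₀ : Fin n) (hi₀ : hA.eigenvalues i₀ = d)
    (lam2 : ℝ) (hlam2 : lam2 = sSup {x : ℝ | ∃ i, i ≠ i₀ ∧ hA.eigenvalues i = x}) :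
    ∀ F : Finset (Fin n), F.Nonempty → F ≠ Finset.univ →
      ((d : ℝ) - lam2) / 2 ≤
        ((Finset.univ.filter
            (fun p : Fin n × Fin n => G.Adj p.1 p.2 ∧ p.1 ∈ F ∧ p.2 ∉ F)).card : ℝ) /
          min (F.card : ℝ) ((Finset.univ \ F).card : ℝ) :=
  cheeger_lower_bound_general n d G hconn hreg hA i₀ hi₀ lam2 hlam2
end

section
/- In an affine resolvable (v,b,r,k,λ)-BIBD (a resolvable BIBD with b = v + r − 1), any two blocks from different parallel classes intersect in exactly k²/v points, and in particular v divides k². -/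
open Finset

private lemma filter_card_one {α : Type*} [Fintype α] {P : α → Prop} [DecidablePred P]
    (h : ∃! a, P a) : (univ.filter P).card = 1 := by
  obtain ⟨a, ha, hu⟩ := h
  rw [Finset.card_eq_one]
  refine ⟨a, ?_⟩
  ext x
  simp only [mem_filter, mem_univ, true_and, mem_singleton]
  exact ⟨fun hx => hu x hx, fun hx => hx ▸ ha⟩

private lemma sum_card_swap {α β : Type*} (s : Finset α) (t : Finset β)
    (P : α → β → Prop) [∀ a b, Decidable (P a b)] :
    ∑ a ∈ s, (t.filter (fun b => P a b)).card
      = ∑ b ∈ t, (s.filter (fun a => P a b)).card := by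
  simp only [Finset.card_filter]
  exact Finset.sum_comm

set_option maxHeartbeats 1600000 in
/-- In an affine resolvable (v,b,r,k,λ)-BIBD (resolvable with b = v + r − 1), any two
blocks from different parallel classes intersect in exactly k²/v points; in particular
v divides k². -/
theorem affine_resolvable_block_intersection (v b r k lam : ℕ)
    (hk2 : 2 ≤ k) (hkv : k < v) (hlam : 1 ≤ lam)
    (B : Fin b → Finset (Fin v)) (c : Fin b → Fin r)
    (hblock : ∀ j, (B j).card = k)
    (hpoint : ∀ p : Fin v, (Finset.univ.filter (fun j => p ∈ B j)).card = r)
    (hpair : ∀ p p' : Fin v, p ≠ p' →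
      (Finset.univ.filter (fun j => p ∈ B j ∧ p' ∈ B j)).card = lam)
    (hres : ∀ i : Fin r, ∀ p : Fin v, ∃! j, c j = i ∧ p ∈ B j)
    (haffine : b + 1 = v + r) :
    v ∣ k ^ 2 ∧ ∀ j j', c j ≠ c j' → (B j ∩ B j').card = k ^ 2 / v := by
  have hv0 : 0 < v := by omega
  have hk0 : 0 < k := by omega
  -- (1) b * k = v * r
  have hE0 : b * k = v * r := by
    have h1 : ∑ j : Fin b, ((univ : Finset (Fin v)).filter (fun p => p ∈ B j)).card
        = ∑ p : Fin v, ((univ : Finset (Fin b)).filter (fun j => p ∈ B j)).card :=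
      sum_card_swap univ univ (fun j p => p ∈ B j)
    have h2 : ∀ j : Fin b, ((univ : Finset (Fin v)).filter (fun p => p ∈ B j)).card = k := by
      intro j; rw [Finset.filter_univ_mem]; exact hblock j
    simp only [h2, hpoint, Finset.sum_const, Finset.card_univ, Fintype.card_fin,
      smul_eq_mul] at h1
    exact h1
  -- (2) lam * (v - 1) = r * (k - 1)
  have hF4 : lam * (v - 1) = r * (k - 1) := by
    have p0 : Fin v := ⟨0, hv0⟩
    have h1 : ∑ p' ∈ (univ : Finset (Fin v)).erase p0,
        ((univ : Finset (Fin b)).filter (fun j => p0 ∈ B j ∧ p' ∈ B j)).card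
        = ∑ j : Fin b, (((univ : Finset (Fin v)).erase p0).filter
            (fun p' => p0 ∈ B j ∧ p' ∈ B j)).card := by
      have := sum_card_swap ((univ : Finset (Fin v)).erase p0) (univ : Finset (Fin b))
        (fun p' j => p0 ∈ B j ∧ p' ∈ B j)
      simpa using this
    have h2 : ∀ j : Fin b, (((univ : Finset (Fin v)).erase p0).filter
        (fun p' => p0 ∈ B j ∧ p' ∈ B j)).card = if p0 ∈ B j then k - 1 else 0 := by
      intro j
      by_cases h : p0 ∈ B j
      · rw [if_pos h]
        have he : ((univ : Finset (Fin v)).erase p0).filter (fun p' => p0 ∈ B j ∧ p' ∈ B j)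
            = (B j).erase p0 := by
          ext x; simp [h, and_comm]
        rw [he, Finset.card_erase_of_mem h, hblock]
      · rw [if_neg h]
        simp [h]
    have h3 : ∑ p' ∈ (univ : Finset (Fin v)).erase p0,
        ((univ : Finset (Fin b)).filter (fun j => p0 ∈ B j ∧ p' ∈ B j)).card
        = (v - 1) * lam := by
      rw [Finset.sum_congr rfl (fun p' hp' => hpair p0 p'
        (by exact (Finset.ne_of_mem_erase hp').symm))]
      rw [Finset.sum_const, Finset.card_erase_of_mem (Finset.mem_univ _),
        Finset.card_univ, Fintype.card_fin, smul_eq_mul]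
    have h4 : ∑ j : Fin b, (((univ : Finset (Fin v)).erase p0).filter
        (fun p' => p0 ∈ B j ∧ p' ∈ B j)).card = r * (k - 1) := by
      rw [Finset.sum_congr rfl (fun j _ => h2 j)]
      rw [← Finset.sum_filter, Finset.sum_const, hpoint, smul_eq_mul]
    rw [mul_comm lam]
    rw [← h3, h1, h4]
  -- integer arithmetic consequences
  zify [show 1 ≤ v by omega, show 1 ≤ k by omega] at hF4
  have hbz : (b:ℤ) + 1 = (v:ℤ) + r := by exact_mod_cast haffine
  have hE0z : (b:ℤ) * k = (v:ℤ) * r := by exact_mod_cast hE0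
  have hvz : (3:ℤ) ≤ (v:ℤ) := by exact_mod_cast (show 3 ≤ v by omega)
  have hkz : (2:ℤ) ≤ (k:ℤ) := by exact_mod_cast hk2
  have hkvz : (k:ℤ) < (v:ℤ) := by exact_mod_cast hkv
  have hlz : (1:ℤ) ≤ (lam:ℤ) := by exact_mod_cast hlam
  have hF6 : (r:ℤ) * ((v:ℤ) - k) = (k:ℤ) * ((v:ℤ) - 1) := by
    linear_combination (k:ℤ) * hbz - hE0z
  have hLeq : (lam:ℤ) * ((v:ℤ) - k) = (k:ℤ) * ((k:ℤ) - 1) := by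
    have hv1 : ((v:ℤ) - 1) ≠ 0 := by omega
    apply mul_left_cancel₀ hv1
    linear_combination ((v:ℤ) - k) * hF4 + ((k:ℤ) - 1) * hF6
  have hReq : (r:ℤ) = (k:ℤ) + lam := by
    have hvk : ((v:ℤ) - k) ≠ 0 := by omega
    apply mul_right_cancel₀ hvk
    linear_combination hF6 - hLeq
  have hr3 : 3 ≤ r := by
    have : (3:ℤ) ≤ (r:ℤ) := by omega
    exact_mod_cast this
  have H : (v:ℤ) * (((r:ℤ)-1) + ((k:ℤ)-1)*((lam:ℤ)-1)) = (k:ℤ)^2 * ((r:ℤ)-1) := by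
    linear_combination (k:ℤ) * hF4 + ((v:ℤ) - k) * hReq
  -- main pairwise intersection result
  have main : ∀ j j' : Fin b, c j' ≠ c j →
      (v:ℤ) * (((B j ∩ B j').card : ℤ)) = (k:ℤ)^2 := by
    intro j j' hjj'
    set S : Finset (Fin b) := univ.filter (fun j'' => ¬ c j'' = c j) with hSdef
    have hj'S : j' ∈ S := by simp [hSdef, hjj']
    -- each parallel class has v/k blocks
    have hclass : ((univ : Finset (Fin b)).filter (fun j'' => c j'' = c j)).card * k = v := by
      have h1 : ∑ j'' ∈ ((univ : Finset (Fin b)).filter (fun j'' => c j'' = c j)),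
          ((univ : Finset (Fin v)).filter (fun p => p ∈ B j'')).card
          = ∑ p : Fin v, (((univ : Finset (Fin b)).filter (fun j'' => c j'' = c j)).filter
              (fun j'' => p ∈ B j'')).card :=
        sum_card_swap _ _ (fun j'' p => p ∈ B j'')
      have h2 : ∀ p : Fin v, (((univ : Finset (Fin b)).filter (fun j'' => c j'' = c j)).filter
          (fun j'' => p ∈ B j'')).card = 1 := by
        intro p
        rw [Finset.filter_filter]
        exact filter_card_one (hres (c j) p)
      simp only [Finset.filter_univ_mem, hblock, h2, Finset.sum_const, smul_eq_mul,
        mul_one, Finset.card_univ, Fintype.card_fin] at h1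
      exact h1
    -- number of blocks in other classes
    have hnk : S.card * k + v = v * r := by
      have hsplit := Finset.card_filter_add_card_filter_not
        (s := (univ : Finset (Fin b))) (p := fun j'' => c j'' = c j)
      rw [Finset.card_univ, Fintype.card_fin] at hsplit
      calc S.card * k + v
          = S.card * k + ((univ : Finset (Fin b)).filter
              (fun j'' => c j'' = c j)).card * k := by rw [hclass]
        _ = (((univ : Finset (Fin b)).filter (fun j'' => c j'' = c j)).card + S.card) * k := by
            ring
        _ = b * k := by rw [hSdef] at *; rw [hsplit]
        _ = v * r := hE0
    -- first moment: sum over other blocks of intersection sizes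
    have hswap1 : ∑ j'' ∈ S, (B j ∩ B j'').card
        = ∑ p ∈ B j, (S.filter (fun j'' => p ∈ B j'')).card := by
      rw [Finset.sum_congr rfl (fun j'' _ => by rw [← Finset.filter_mem_eq_inter])]
      exact sum_card_swap S (B j) (fun j'' p => p ∈ B j'')
    have hinner1 : ∀ p : Fin v, (S.filter (fun j'' => p ∈ B j'')).card + 1 = r := by
      intro p
      have hsplit := Finset.card_filter_add_card_filter_not
        (s := (univ : Finset (Fin b)).filter (fun j'' => p ∈ B j''))
        (p := fun j'' => c j'' = c j)
      rw [Finset.filter_filter, Finset.filter_filter, hpoint p] at hsplit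
      have h1 : ((univ : Finset (Fin b)).filter
          (fun j'' => p ∈ B j'' ∧ c j'' = c j)).card = 1 := by
        refine filter_card_one ?_
        obtain ⟨j0, hj0, hu⟩ := hres (c j) p
        exact ⟨j0, ⟨hj0.2, hj0.1⟩, fun y hy => hu y ⟨hy.2, hy.1⟩⟩
      have h2 : (S.filter (fun j'' => p ∈ B j'')).card
          = ((univ : Finset (Fin b)).filter
            (fun j'' => p ∈ B j'' ∧ ¬ c j'' = c j)).card := by
        rw [hSdef, Finset.filter_filter]
        congr 1
        ext x
        simp only [and_comm]
      rw [h1, ← h2] at hsplit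
      omega
    have hs1 : (∑ j'' ∈ S, (B j ∩ B j'').card) + k = k * r := by
      have h5 : ∑ p ∈ B j, ((S.filter (fun j'' => p ∈ B j'')).card + 1) = k * r := by
        rw [Finset.sum_congr rfl (fun p _ => hinner1 p), Finset.sum_const, hblock,
          smul_eq_mul]
      rw [Finset.sum_add_distrib, Finset.sum_const, hblock, smul_eq_mul, mul_one] at h5
      rw [hswap1]
      exact h5
    -- second moment: sum over other blocks of ordered pairs in intersections
    have hoffeq : ∀ j'' : Fin b, ((B j).offDiag.filter
        (fun q => q.1 ∈ B j'' ∧ q.2 ∈ B j'')) = (B j ∩ B j'').offDiag := by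
      intro j''
      ext ⟨a, b'⟩
      simp only [Finset.mem_filter, Finset.mem_offDiag, Finset.mem_inter]
      tauto
    have hswap2 : ∑ j'' ∈ S, (B j ∩ B j'').offDiag.card
        = ∑ q ∈ (B j).offDiag, (S.filter (fun j'' => q.1 ∈ B j'' ∧ q.2 ∈ B j'')).card := by
      rw [Finset.sum_congr rfl (fun j'' _ => by rw [← hoffeq j''])]
      exact sum_card_swap S ((B j).offDiag) (fun j'' q => q.1 ∈ B j'' ∧ q.2 ∈ B j'')
    have hinner2 : ∀ q ∈ (B j).offDiag,
        (S.filter (fun j'' => q.1 ∈ B j'' ∧ q.2 ∈ B j'')).card + 1 = lam := by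
      intro q hq
      rw [Finset.mem_offDiag] at hq
      obtain ⟨hq1, hq2, hq12⟩ := hq
      have hsplit := Finset.card_filter_add_card_filter_not
        (s := (univ : Finset (Fin b)).filter (fun j'' => q.1 ∈ B j'' ∧ q.2 ∈ B j''))
        (p := fun j'' => c j'' = c j)
      rw [Finset.filter_filter, Finset.filter_filter, hpair q.1 q.2 hq12] at hsplit
      have h1 : ((univ : Finset (Fin b)).filter
          (fun j'' => (q.1 ∈ B j'' ∧ q.2 ∈ B j'') ∧ c j'' = c j)).card = 1 := by
        refine filter_card_one ⟨j, ⟨⟨hq1, hq2⟩, rfl⟩, fun y hy => ?_⟩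
        exact (hres (c j) q.1).unique ⟨hy.2, hy.1.1⟩ ⟨rfl, hq1⟩
      have h2 : (S.filter (fun j'' => q.1 ∈ B j'' ∧ q.2 ∈ B j'')).card
          = ((univ : Finset (Fin b)).filter
            (fun j'' => (q.1 ∈ B j'' ∧ q.2 ∈ B j'') ∧ ¬ c j'' = c j)).card := by
        rw [hSdef, Finset.filter_filter]
        congr 1
        ext x
        simp only [and_comm]
      rw [h1, ← h2] at hsplit
      omega
    have hs2 : (∑ j'' ∈ S, (B j ∩ B j'').offDiag.card) + (k * k - k)
        = (k * k - k) * lam := by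
      have hoc : (B j).offDiag.card = k * k - k := by
        rw [Finset.offDiag_card, hblock]
      have h5 : ∑ q ∈ (B j).offDiag,
          ((S.filter (fun j'' => q.1 ∈ B j'' ∧ q.2 ∈ B j'')).card + 1)
          = (k * k - k) * lam := by
        rw [Finset.sum_congr rfl hinner2, Finset.sum_const, hoc, smul_eq_mul]
      rw [Finset.sum_add_distrib, Finset.sum_const, hoc, smul_eq_mul, mul_one] at h5
      rw [hswap2]
      exact h5
    -- pass to integers
    have hterm : ∀ j'' : Fin b, (((B j ∩ B j'').offDiag.card : ℕ) : ℤ)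
        = ((B j ∩ B j'').card : ℤ)^2 - ((B j ∩ B j'').card : ℤ) := by
      intro j''
      rw [Finset.offDiag_card]
      have hle : (B j ∩ B j'').card ≤ (B j ∩ B j'').card * (B j ∩ B j'').card := by
        nlinarith [Nat.zero_le (B j ∩ B j'').card]
      push_cast [Nat.cast_sub hle]
      ring
    have hT2 : ((∑ j'' ∈ S, (B j ∩ B j'').offDiag.card : ℕ) : ℤ)
        = (∑ j'' ∈ S, ((B j ∩ B j'').card : ℤ)^2)
          - ∑ j'' ∈ S, ((B j ∩ B j'').card : ℤ) := by
      rw [Nat.cast_sum, Finset.sum_congr rfl (fun j'' _ => hterm j''),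
        Finset.sum_sub_distrib]
    have hkk : k ≤ k * k := Nat.le_mul_of_pos_left k hk0
    have hS1K : (∑ j'' ∈ S, ((B j ∩ B j'').card : ℤ)) + k = (k:ℤ) * r := by
      have h := congrArg (Nat.cast : ℕ → ℤ) hs1
      push_cast at h
      exact h
    have hSDK : ((∑ j'' ∈ S, ((B j ∩ B j'').card : ℤ)^2)
          - ∑ j'' ∈ S, ((B j ∩ B j'').card : ℤ)) + ((k:ℤ) * k - k)
        = ((k:ℤ) * k - k) * lam := by
      have h := congrArg (Nat.cast : ℕ → ℤ) hs2
      rw [Nat.cast_add, hT2] at h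
      push_cast [Nat.cast_sub hkk] at h
      exact h
    have hNK : (S.card : ℤ) * k + v = (v:ℤ) * r := by exact_mod_cast hnk
    have eS1 : (∑ j'' ∈ S, ((B j ∩ B j'').card : ℤ)) = (k:ℤ) * r - k := by
      linarith [hS1K]
    have eT : (∑ j'' ∈ S, ((B j ∩ B j'').card : ℤ)^2)
        = ((k:ℤ) * r - k) + (((k:ℤ) * k - k) * lam - ((k:ℤ) * k - k)) := by
      linarith [hSDK, eS1]
    have eNK : (S.card : ℤ) * k = (v:ℤ) * r - v := by linarith [hNK]
    have key : (S.card : ℤ) * (∑ j'' ∈ S, ((B j ∩ B j'').card : ℤ)^2)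
        = (∑ j'' ∈ S, ((B j ∩ B j'').card : ℤ))^2 := by
      have hKne : (k:ℤ) ≠ 0 := by omega
      apply mul_left_cancel₀ hKne
      rw [eT, eS1]
      calc (k:ℤ) * ((S.card : ℤ) * (((k:ℤ) * r - k)
              + (((k:ℤ) * k - k) * lam - ((k:ℤ) * k - k))))
          = ((S.card : ℤ) * k) * (((k:ℤ) * r - k)
              + (((k:ℤ) * k - k) * lam - ((k:ℤ) * k - k))) := by ring
        _ = ((v:ℤ) * r - v) * (((k:ℤ) * r - k)
              + (((k:ℤ) * k - k) * lam - ((k:ℤ) * k - k))) := by rw [eNK]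
        _ = ((r:ℤ) - 1) * ((v:ℤ) * (((r:ℤ) - 1) + ((k:ℤ) - 1) * ((lam:ℤ) - 1))) * k := by
            ring
        _ = ((r:ℤ) - 1) * ((k:ℤ)^2 * ((r:ℤ) - 1)) * k := by rw [H]
        _ = (k:ℤ) * ((k:ℤ) * r - k)^2 := by ring
    have hmean : (v:ℤ) * (∑ j'' ∈ S, ((B j ∩ B j'').card : ℤ))
        = (S.card : ℤ) * (k:ℤ)^2 := by
      linear_combination (v:ℤ) * eS1 - (k:ℤ) * eNK
    have expand : ∑ j'' ∈ S, ((v:ℤ) * ((B j ∩ B j'').card : ℤ) - (k:ℤ)^2)^2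
        = (v:ℤ)^2 * (∑ j'' ∈ S, ((B j ∩ B j'').card : ℤ)^2)
          - 2 * (v:ℤ) * (k:ℤ)^2 * (∑ j'' ∈ S, ((B j ∩ B j'').card : ℤ))
          + (S.card : ℤ) * (k:ℤ)^4 := by
      rw [Finset.sum_congr rfl (fun j'' _ => (by ring :
        ((v:ℤ) * ((B j ∩ B j'').card : ℤ) - (k:ℤ)^2)^2
          = (v:ℤ)^2 * ((B j ∩ B j'').card : ℤ)^2
            - 2 * (v:ℤ) * (k:ℤ)^2 * ((B j ∩ B j'').card : ℤ) + (k:ℤ)^4))]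
      rw [Finset.sum_add_distrib, Finset.sum_sub_distrib, ← Finset.mul_sum,
        ← Finset.mul_sum, Finset.sum_const, nsmul_eq_mul]
    have hsumsq : (S.card : ℤ)
        * ∑ j'' ∈ S, ((v:ℤ) * ((B j ∩ B j'').card : ℤ) - (k:ℤ)^2)^2 = 0 := by
      rw [expand]
      linear_combination (v:ℤ)^2 * key
        + ((v:ℤ) * (∑ j'' ∈ S, ((B j ∩ B j'').card : ℤ))
            - (S.card : ℤ) * (k:ℤ)^2) * hmean
    have hNpos : (0:ℤ) < (S.card : ℤ) := by
      have h0 : S.card ≠ 0 := Finset.card_ne_zero_of_mem hj'S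
      exact_mod_cast Nat.pos_of_ne_zero h0
    have hzero : ∑ j'' ∈ S, ((v:ℤ) * ((B j ∩ B j'').card : ℤ) - (k:ℤ)^2)^2 = 0 := by
      rcases mul_eq_zero.mp hsumsq with h | h
      · exact absurd h (ne_of_gt hNpos)
      · exact h
    have hj'0 := (Finset.sum_eq_zero_iff_of_nonneg
      (fun a _ => sq_nonneg _)).mp hzero j' hj'S
    have := (pow_eq_zero_iff two_ne_zero).mp hj'0
    linarith
  constructor
  · -- v ∣ k ^ 2
    have h0r : 0 < r := by omega
    have h1r : 1 < r := by omega
    obtain ⟨j, hj, _⟩ := hres ⟨0, h0r⟩ ⟨0, hv0⟩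
    obtain ⟨j', hj', _⟩ := hres ⟨1, h1r⟩ ⟨0, hv0⟩
    have hne : c j' ≠ c j := by
      rw [hj.1, hj'.1]
      exact Fin.ne_of_val_ne one_ne_zero
    have h := main j j' hne
    have h2 : k ^ 2 = v * (B j ∩ B j').card := by exact_mod_cast h.symm
    exact ⟨_, h2⟩
  · intro j j' hne
    have h := main j j' (Ne.symm hne)
    have h2 : k ^ 2 = (B j ∩ B j').card * v := by
      exact_mod_cast (by linarith : ((k:ℤ)^2 = ((B j ∩ B j').card : ℤ) * v))
    exact (Nat.div_eq_of_eq_mul_left hv0 h2).symm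
end
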